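/- The distance-awareness dot product is SE(2)-invariant: with φ and ψ as defined (φ(q) = (q₁₂/(q₁₂²+ε))(q₁₂², q₀₁²+q₂₀², q₀₁q₁₂, q₂₀q₁₂), ψ(k) = (k₁₂/(k₁₂²+ε))(-k₀₁²-k₂₀², -k₁₂², 2k₀₁k₁₂, 2k₂₀k₁₂)), if q and k are simultaneously conjugated by a translation t = 1 - (a/2)e₀₁ + (b/2)e₂₀ or rotation r = cos(θ/2) - sin(θ/2)e₁₂ in R*_{2,0,1}, then φ(uqu⁻¹)·ψ(uku⁻¹) = φ(q)·ψ(k). -/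
import Mathlib


noncomputable section

/-- The projective geometric algebra `ℝ*_{2,0,1}`, represented by coefficients over the
basis `1, e₀, e₁, e₂, e₀₁, e₂₀, e₁₂, e₀₁₂` (generators `e₀, e₁, e₂` with `e₀² = 0`,
`e₁² = e₂² = 1`, distinct generators anticommuting). -/
@[ext] structure GA where
  s : ℝ
  c0 : ℝ
  c1 : ℝ
  c2 : ℝ
  c01 : ℝ
  c20 : ℝ
  c12 : ℝ
  c012 : ℝ

namespace GA

instance : Zero GA := ⟨⟨0, 0, 0, 0, 0, 0, 0, 0⟩⟩
instance : One GA := ⟨⟨1, 0, 0, 0, 0, 0, 0, 0⟩⟩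
instance : Add GA :=
  ⟨fun a b => ⟨a.s + b.s, a.c0 + b.c0, a.c1 + b.c1, a.c2 + b.c2,
    a.c01 + b.c01, a.c20 + b.c20, a.c12 + b.c12, a.c012 + b.c012⟩⟩
instance : Neg GA :=
  ⟨fun a => ⟨-a.s, -a.c0, -a.c1, -a.c2, -a.c01, -a.c20, -a.c12, -a.c012⟩⟩
instance : Sub GA := ⟨fun a b => a + -b⟩
instance : SMul ℝ GA :=
  ⟨fun r a => ⟨r * a.s, r * a.c0, r * a.c1, r * a.c2,
    r * a.c01, r * a.c20, r * a.c12, r * a.c012⟩⟩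

/-- The geometric (Clifford) product of `ℝ*_{2,0,1}`. -/
instance : Mul GA :=
  ⟨fun a b =>
    ⟨a.s * b.s + a.c1 * b.c1 + a.c2 * b.c2 - a.c12 * b.c12,
     a.s * b.c0 + a.c0 * b.s - a.c1 * b.c01 + a.c01 * b.c1 + a.c2 * b.c20 - a.c20 * b.c2
       - a.c12 * b.c012 - a.c012 * b.c12,
     a.s * b.c1 + a.c1 * b.s - a.c2 * b.c12 + a.c12 * b.c2,
     a.s * b.c2 + a.c2 * b.s + a.c1 * b.c12 - a.c12 * b.c1,
     a.s * b.c01 + a.c01 * b.s + a.c0 * b.c1 - a.c1 * b.c0 + a.c20 * b.c12 - a.c12 * b.c20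
       + a.c2 * b.c012 + a.c012 * b.c2,
     a.s * b.c20 + a.c20 * b.s + a.c2 * b.c0 - a.c0 * b.c2 - a.c01 * b.c12 + a.c12 * b.c01
       + a.c1 * b.c012 + a.c012 * b.c1,
     a.s * b.c12 + a.c12 * b.s + a.c1 * b.c2 - a.c2 * b.c1,
     a.s * b.c012 + a.c012 * b.s + a.c0 * b.c12 + a.c12 * b.c0 + a.c1 * b.c20
       + a.c20 * b.c1 + a.c2 * b.c01 + a.c01 * b.c2⟩⟩

def e0 : GA := ⟨0, 1, 0, 0, 0, 0, 0, 0⟩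
def e1 : GA := ⟨0, 0, 1, 0, 0, 0, 0, 0⟩
def e2 : GA := ⟨0, 0, 0, 1, 0, 0, 0, 0⟩
def e01 : GA := ⟨0, 0, 0, 0, 1, 0, 0, 0⟩
def e20 : GA := ⟨0, 0, 0, 0, 0, 1, 0, 0⟩
def e12 : GA := ⟨0, 0, 0, 0, 0, 0, 1, 0⟩
def e012 : GA := ⟨0, 0, 0, 0, 0, 0, 0, 1⟩

/-- Encoding of the point `(x, y)` as `x e₂₀ + y e₀₁ + e₁₂`. -/
def pt (x y : ℝ) : GA := x • e20 + y • e01 + e12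

/-- Encoding of the line `a x + b y + c = 0` as `a e₁ + b e₂ + c e₀`. -/
def line (a b c : ℝ) : GA := a • e1 + b • e2 + c • e0

/-- Encoding of the translation by `(a, b)`: `t = 1 - (a/2) e₀₁ + (b/2) e₂₀`. -/
def transl (a b : ℝ) : GA := 1 - (a / 2) • e01 + (b / 2) • e20

/-- The inverse of the translation by `(a, b)`. -/
def translInv (a b : ℝ) : GA := 1 + (a / 2) • e01 - (b / 2) • e20

/-- Encoding of the counterclockwise rotation by angle `θ`:
`r = cos(θ/2) - sin(θ/2) e₁₂`. -/
def rot (θ : ℝ) : GA := Real.cos (θ / 2) • 1 - Real.sin (θ / 2) • e12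

/-- The inverse of the rotation by angle `θ`. -/
def rotInv (θ : ℝ) : GA := Real.cos (θ / 2) • 1 + Real.sin (θ / 2) • e12

/-- The exterior (wedge) product on `ℝ*_{2,0,1}`: bilinear, with `eᵢ ∧ eⱼ = eᵢ eⱼ` for
distinct generators and `v ∧ v = 0` for vectors. -/
def wedge (a b : GA) : GA :=
  ⟨a.s * b.s,
   a.s * b.c0 + a.c0 * b.s,
   a.s * b.c1 + a.c1 * b.s,
   a.s * b.c2 + a.c2 * b.s,
   a.s * b.c01 + a.c01 * b.s + a.c0 * b.c1 - a.c1 * b.c0,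
   a.s * b.c20 + a.c20 * b.s + a.c2 * b.c0 - a.c0 * b.c2,
   a.s * b.c12 + a.c12 * b.s + a.c1 * b.c2 - a.c2 * b.c1,
   a.s * b.c012 + a.c012 * b.s + a.c0 * b.c12 + a.c12 * b.c0 + a.c1 * b.c20
     + a.c20 * b.c1 + a.c2 * b.c01 + a.c01 * b.c2⟩

/-- The multivector dual: reverses the coefficient order on the basis
`1, e₀, e₁, e₂, e₀₁, e₂₀, e₁₂, e₀₁₂`. -/
def dual (a : GA) : GA := ⟨a.c012, a.c12, a.c20, a.c01, a.c2, a.c1, a.c0, a.s⟩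

/-- The join operator: `Join(x, y) = (x* ∧ y*)*`. -/
def join (a b : GA) : GA := dual (wedge (dual a) (dual b))

end GA

open GA

/-- The distance-awareness query feature map `φ`. -/
def phiDA (ε : ℝ) (q : GA) : Fin 4 → ℝ :=
  (q.c12 / (q.c12 ^ 2 + ε)) •
    ![q.c12 ^ 2, q.c01 ^ 2 + q.c20 ^ 2, q.c01 * q.c12, q.c20 * q.c12]

/-- The distance-awareness key feature map `ψ`. -/
def psiDA (ε : ℝ) (k : GA) : Fin 4 → ℝ :=
  (k.c12 / (k.c12 ^ 2 + ε)) •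
    ![-k.c01 ^ 2 - k.c20 ^ 2, -k.c12 ^ 2, 2 * k.c01 * k.c12, 2 * k.c20 * k.c12]

/-- The Euclidean dot product on `ℝ⁴`. -/
def dot4 (u v : Fin 4 → ℝ) : ℝ := ∑ i, u i * v i

namespace GA
@[simp] lemma one_s : (1 : GA).s = 1 := rfl
@[simp] lemma add_s (x y : GA) : (x + y).s = x.s + y.s := rfl
@[simp] lemma neg_s (x : GA) : (-x).s = -x.s := rfl
@[simp] lemma sub_s (x y : GA) : (x - y).s = x.s + -y.s := rfl
@[simp] lemma smul_s (r : ℝ) (x : GA) : (r • x).s = r * x.s := rfl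
@[simp] lemma one_c0 : (1 : GA).c0 = 0 := rfl
@[simp] lemma add_c0 (x y : GA) : (x + y).c0 = x.c0 + y.c0 := rfl
@[simp] lemma neg_c0 (x : GA) : (-x).c0 = -x.c0 := rfl
@[simp] lemma sub_c0 (x y : GA) : (x - y).c0 = x.c0 + -y.c0 := rfl
@[simp] lemma smul_c0 (r : ℝ) (x : GA) : (r • x).c0 = r * x.c0 := rfl
@[simp] lemma one_c1 : (1 : GA).c1 = 0 := rfl
@[simp] lemma add_c1 (x y : GA) : (x + y).c1 = x.c1 + y.c1 := rfl
@[simp] lemma neg_c1 (x : GA) : (-x).c1 = -x.c1 := rfl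
@[simp] lemma sub_c1 (x y : GA) : (x - y).c1 = x.c1 + -y.c1 := rfl
@[simp] lemma smul_c1 (r : ℝ) (x : GA) : (r • x).c1 = r * x.c1 := rfl
@[simp] lemma one_c2 : (1 : GA).c2 = 0 := rfl
@[simp] lemma add_c2 (x y : GA) : (x + y).c2 = x.c2 + y.c2 := rfl
@[simp] lemma neg_c2 (x : GA) : (-x).c2 = -x.c2 := rfl
@[simp] lemma sub_c2 (x y : GA) : (x - y).c2 = x.c2 + -y.c2 := rfl
@[simp] lemma smul_c2 (r : ℝ) (x : GA) : (r • x).c2 = r * x.c2 := rfl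
@[simp] lemma one_c01 : (1 : GA).c01 = 0 := rfl
@[simp] lemma add_c01 (x y : GA) : (x + y).c01 = x.c01 + y.c01 := rfl
@[simp] lemma neg_c01 (x : GA) : (-x).c01 = -x.c01 := rfl
@[simp] lemma sub_c01 (x y : GA) : (x - y).c01 = x.c01 + -y.c01 := rfl
@[simp] lemma smul_c01 (r : ℝ) (x : GA) : (r • x).c01 = r * x.c01 := rfl
@[simp] lemma one_c20 : (1 : GA).c20 = 0 := rfl
@[simp] lemma add_c20 (x y : GA) : (x + y).c20 = x.c20 + y.c20 := rfl
@[simp] lemma neg_c20 (x : GA) : (-x).c20 = -x.c20 := rfl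
@[simp] lemma sub_c20 (x y : GA) : (x - y).c20 = x.c20 + -y.c20 := rfl
@[simp] lemma smul_c20 (r : ℝ) (x : GA) : (r • x).c20 = r * x.c20 := rfl
@[simp] lemma one_c12 : (1 : GA).c12 = 0 := rfl
@[simp] lemma add_c12 (x y : GA) : (x + y).c12 = x.c12 + y.c12 := rfl
@[simp] lemma neg_c12 (x : GA) : (-x).c12 = -x.c12 := rfl
@[simp] lemma sub_c12 (x y : GA) : (x - y).c12 = x.c12 + -y.c12 := rfl
@[simp] lemma smul_c12 (r : ℝ) (x : GA) : (r • x).c12 = r * x.c12 := rfl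
@[simp] lemma one_c012 : (1 : GA).c012 = 0 := rfl
@[simp] lemma add_c012 (x y : GA) : (x + y).c012 = x.c012 + y.c012 := rfl
@[simp] lemma neg_c012 (x : GA) : (-x).c012 = -x.c012 := rfl
@[simp] lemma sub_c012 (x y : GA) : (x - y).c012 = x.c012 + -y.c012 := rfl
@[simp] lemma smul_c012 (r : ℝ) (x : GA) : (r • x).c012 = r * x.c012 := rfl
@[simp] lemma mul_s (x y : GA) : (x * y).s = x.s * y.s + x.c1 * y.c1 + x.c2 * y.c2 - x.c12 * y.c12 := rfl
@[simp] lemma mul_c0 (x y : GA) : (x * y).c0 = x.s * y.c0 + x.c0 * y.s - x.c1 * y.c01 + x.c01 * y.c1 + x.c2 * y.c20 - x.c20 * y.c2 - x.c12 * y.c012 - x.c012 * y.c12 := rfl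
@[simp] lemma mul_c1 (x y : GA) : (x * y).c1 = x.s * y.c1 + x.c1 * y.s - x.c2 * y.c12 + x.c12 * y.c2 := rfl
@[simp] lemma mul_c2 (x y : GA) : (x * y).c2 = x.s * y.c2 + x.c2 * y.s + x.c1 * y.c12 - x.c12 * y.c1 := rfl
@[simp] lemma mul_c01 (x y : GA) : (x * y).c01 = x.s * y.c01 + x.c01 * y.s + x.c0 * y.c1 - x.c1 * y.c0 + x.c20 * y.c12 - x.c12 * y.c20 + x.c2 * y.c012 + x.c012 * y.c2 := rfl
@[simp] lemma mul_c20 (x y : GA) : (x * y).c20 = x.s * y.c20 + x.c20 * y.s + x.c2 * y.c0 - x.c0 * y.c2 - x.c01 * y.c12 + x.c12 * y.c01 + x.c1 * y.c012 + x.c012 * y.c1 := rfl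
@[simp] lemma mul_c12 (x y : GA) : (x * y).c12 = x.s * y.c12 + x.c12 * y.s + x.c1 * y.c2 - x.c2 * y.c1 := rfl
@[simp] lemma mul_c012 (x y : GA) : (x * y).c012 = x.s * y.c012 + x.c012 * y.s + x.c0 * y.c12 + x.c12 * y.c0 + x.c1 * y.c20 + x.c20 * y.c1 + x.c2 * y.c01 + x.c01 * y.c2 := rfl
@[simp] lemma transl_s (a b : ℝ) : (transl a b).s = 1 := by simp [transl, e01, e20]
@[simp] lemma transl_c0 (a b : ℝ) : (transl a b).c0 = 0 := by simp [transl, e01, e20]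
@[simp] lemma transl_c1 (a b : ℝ) : (transl a b).c1 = 0 := by simp [transl, e01, e20]
@[simp] lemma transl_c2 (a b : ℝ) : (transl a b).c2 = 0 := by simp [transl, e01, e20]
@[simp] lemma transl_c01 (a b : ℝ) : (transl a b).c01 = -(a / 2) := by simp [transl, e01, e20]
@[simp] lemma transl_c20 (a b : ℝ) : (transl a b).c20 = b / 2 := by simp [transl, e01, e20]
@[simp] lemma transl_c12 (a b : ℝ) : (transl a b).c12 = 0 := by simp [transl, e01, e20]
@[simp] lemma transl_c012 (a b : ℝ) : (transl a b).c012 = 0 := by simp [transl, e01, e20]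
@[simp] lemma translInv_s (a b : ℝ) : (translInv a b).s = 1 := by simp [translInv, e01, e20]
@[simp] lemma translInv_c0 (a b : ℝ) : (translInv a b).c0 = 0 := by simp [translInv, e01, e20]
@[simp] lemma translInv_c1 (a b : ℝ) : (translInv a b).c1 = 0 := by simp [translInv, e01, e20]
@[simp] lemma translInv_c2 (a b : ℝ) : (translInv a b).c2 = 0 := by simp [translInv, e01, e20]
@[simp] lemma translInv_c01 (a b : ℝ) : (translInv a b).c01 = a / 2 := by simp [translInv, e01, e20]
@[simp] lemma translInv_c20 (a b : ℝ) : (translInv a b).c20 = -(b / 2) := by simp [translInv, e01, e20]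
@[simp] lemma translInv_c12 (a b : ℝ) : (translInv a b).c12 = 0 := by simp [translInv, e01, e20]
@[simp] lemma translInv_c012 (a b : ℝ) : (translInv a b).c012 = 0 := by simp [translInv, e01, e20]
@[simp] lemma rot_s (θ : ℝ) : (rot θ).s = Real.cos (θ / 2) := by simp [rot, e12]
@[simp] lemma rot_c0 (θ : ℝ) : (rot θ).c0 = 0 := by simp [rot, e12]
@[simp] lemma rot_c1 (θ : ℝ) : (rot θ).c1 = 0 := by simp [rot, e12]
@[simp] lemma rot_c2 (θ : ℝ) : (rot θ).c2 = 0 := by simp [rot, e12]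
@[simp] lemma rot_c01 (θ : ℝ) : (rot θ).c01 = 0 := by simp [rot, e12]
@[simp] lemma rot_c20 (θ : ℝ) : (rot θ).c20 = 0 := by simp [rot, e12]
@[simp] lemma rot_c12 (θ : ℝ) : (rot θ).c12 = -Real.sin (θ / 2) := by simp [rot, e12]
@[simp] lemma rot_c012 (θ : ℝ) : (rot θ).c012 = 0 := by simp [rot, e12]
@[simp] lemma rotInv_s (θ : ℝ) : (rotInv θ).s = Real.cos (θ / 2) := by simp [rotInv, e12]
@[simp] lemma rotInv_c0 (θ : ℝ) : (rotInv θ).c0 = 0 := by simp [rotInv, e12]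
@[simp] lemma rotInv_c1 (θ : ℝ) : (rotInv θ).c1 = 0 := by simp [rotInv, e12]
@[simp] lemma rotInv_c2 (θ : ℝ) : (rotInv θ).c2 = 0 := by simp [rotInv, e12]
@[simp] lemma rotInv_c01 (θ : ℝ) : (rotInv θ).c01 = 0 := by simp [rotInv, e12]
@[simp] lemma rotInv_c20 (θ : ℝ) : (rotInv θ).c20 = 0 := by simp [rotInv, e12]
@[simp] lemma rotInv_c12 (θ : ℝ) : (rotInv θ).c12 = Real.sin (θ / 2) := by simp [rotInv, e12]
@[simp] lemma rotInv_c012 (θ : ℝ) : (rotInv θ).c012 = 0 := by simp [rotInv, e12]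
end GA

namespace GA

lemma tconj_c01 (a b : ℝ) (q : GA) :
    (transl a b * q * translInv a b).c01 = q.c01 + b * q.c12 := by simp; ring

lemma tconj_c20 (a b : ℝ) (q : GA) :
    (transl a b * q * translInv a b).c20 = q.c20 + a * q.c12 := by simp; ring

lemma tconj_c12 (a b : ℝ) (q : GA) :
    (transl a b * q * translInv a b).c12 = q.c12 := by simp

lemma rconj_c01 (θ : ℝ) (q : GA) :
    (rot θ * q * rotInv θ).c01 =
      (Real.cos (θ/2) ^ 2 - Real.sin (θ/2) ^ 2) * q.c01
        + (2 * Real.cos (θ/2) * Real.sin (θ/2)) * q.c20 := by simp; ring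

lemma rconj_c20 (θ : ℝ) (q : GA) :
    (rot θ * q * rotInv θ).c20 =
      (Real.cos (θ/2) ^ 2 - Real.sin (θ/2) ^ 2) * q.c20
        - (2 * Real.cos (θ/2) * Real.sin (θ/2)) * q.c01 := by simp; ring

lemma rconj_c12 (θ : ℝ) (q : GA) :
    (rot θ * q * rotInv θ).c12 = q.c12 := by
  simp; linear_combination q.c12 * Real.sin_sq_add_cos_sq (θ/2)

end GA

lemma dot4_key_rot (eps C S : ℝ) (h : C ^ 2 + S ^ 2 = 1) (q k q' k' : GA)
    (hq1 : q'.c01 = C * q.c01 + S * q.c20) (hq2 : q'.c20 = C * q.c20 - S * q.c01)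
    (hq3 : q'.c12 = q.c12)
    (hk1 : k'.c01 = C * k.c01 + S * k.c20) (hk2 : k'.c20 = C * k.c20 - S * k.c01)
    (hk3 : k'.c12 = k.c12) :
    dot4 (phiDA eps q') (psiDA eps k') = dot4 (phiDA eps q) (psiDA eps k) := by
  simp only [dot4, phiDA, psiDA, Fin.sum_univ_four, Pi.smul_apply, smul_eq_mul,
    Matrix.cons_val_zero, Matrix.cons_val_one, Matrix.head_cons,
    Matrix.cons_val_two, Matrix.tail_cons, Matrix.cons_val_three]
  rw [hq1, hq2, hq3, hk1, hk2, hk3]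
  linear_combination (-(q.c12 / (q.c12 ^ 2 + eps) * (k.c12 / (k.c12 ^ 2 + eps))) *
    ((q.c01 * k.c12 - k.c01 * q.c12) ^ 2 + (q.c20 * k.c12 - k.c20 * q.c12) ^ 2)) * h

lemma dot4_key_transl (eps a b : ℝ) (q k q' k' : GA)
    (hq1 : q'.c01 = q.c01 + b * q.c12) (hq2 : q'.c20 = q.c20 + a * q.c12)
    (hq3 : q'.c12 = q.c12)
    (hk1 : k'.c01 = k.c01 + b * k.c12) (hk2 : k'.c20 = k.c20 + a * k.c12)
    (hk3 : k'.c12 = k.c12) :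
    dot4 (phiDA eps q') (psiDA eps k') = dot4 (phiDA eps q) (psiDA eps k) := by
  simp only [dot4, phiDA, psiDA, Fin.sum_univ_four, Pi.smul_apply, smul_eq_mul,
    Matrix.cons_val_zero, Matrix.cons_val_one, Matrix.head_cons,
    Matrix.cons_val_two, Matrix.tail_cons, Matrix.cons_val_three]
  rw [hq1, hq2, hq3, hk1, hk2, hk3]
  ring

/-- The distance-awareness dot product `φ(q) · ψ(k)` is SE(2)-invariant: it is unchanged
when `q` and `k` are simultaneously conjugated by a translation
`t = 1 - (a/2) e₀₁ + (b/2) e₂₀` or a rotation `r = cos(θ/2) - sin(θ/2) e₁₂`. -/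
theorem distance_awareness_invariant (ε a b θ : ℝ) (q k : GA) :
    dot4 (phiDA ε (transl a b * q * translInv a b)) (psiDA ε (transl a b * k * translInv a b)) =
        dot4 (phiDA ε q) (psiDA ε k) ∧
    dot4 (phiDA ε (rot θ * q * rotInv θ)) (psiDA ε (rot θ * k * rotInv θ)) =
        dot4 (phiDA ε q) (psiDA ε k) := by
  constructor
  · exact dot4_key_transl ε a b q k _ _ (GA.tconj_c01 a b q) (GA.tconj_c20 a b q)
      (GA.tconj_c12 a b q) (GA.tconj_c01 a b k) (GA.tconj_c20 a b k) (GA.tconj_c12 a b k)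
  · have h : (Real.cos (θ/2) ^ 2 - Real.sin (θ/2) ^ 2) ^ 2
        + (2 * Real.cos (θ/2) * Real.sin (θ/2)) ^ 2 = 1 := by
      linear_combination (Real.sin (θ/2) ^ 2 + Real.cos (θ/2) ^ 2 + 1) *
        Real.sin_sq_add_cos_sq (θ/2)
    exact dot4_key_rot ε _ _ h q k _ _ (GA.rconj_c01 θ q) (GA.rconj_c20 θ q)
      (GA.rconj_c12 θ q) (GA.rconj_c01 θ k) (GA.rconj_c20 θ k) (GA.rconj_c12 θ k)
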